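/- Let K = (G, M, I) be a formal context, m ∈ M, R = G \ m', g ∈ R, L = op^{g,m}(K), and let 𝒮 be a representative system of R-mixed generators of K. Then the restriction mapping S ↦ S \ R is injective on N = {S ∈ 𝒮 | S is not an R-mixed generator of L}: if S, T ∈ N and S \ R = T \ R, then S = T. -/
import Mathlib


/-- Derivation of a set of objects: the attributes shared by all of them. -/
def intentOf {G M : Type*} (I : G → M → Prop) (S : Set G) : Set M :=
  {n | ∀ g ∈ S, I g n}

/-- Derivation of a set of attributes: the objects having all of them. -/
def extentOf {G M : Type*} (I : G → M → Prop) (B : Set M) : Set G :=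
  {g | ∀ n ∈ B, I g n}

/-- Double derivation (closure) of a set of objects. -/
def cl {G M : Type*} (I : G → M → Prop) (S : Set G) : Set G :=
  extentOf I (intentOf I S)

/-- A set of objects is an extent if it is closed under double derivation. -/
def IsExtent {G M : Type*} (I : G → M → Prop) (S : Set G) : Prop :=
  cl I S = S

/-- The number of concepts of the context equals its number of extents. -/
noncomputable def numConcepts {G M : Type*} (I : G → M → Prop) : ℕ :=
  {S : Set G | IsExtent I S}.ncard

/-- The context op^{g,m}(K): fill the row of `g` except at `m`,
and fill the column of `m` except at `g`. -/
def opRel {G M : Type*} (I : G → M → Prop) (g : G) (m : M) : G → M → Prop :=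
  fun h n => I h n ∨ (h = g ∧ n ≠ m) ∨ (h ≠ g ∧ n = m)

/-- `S` is an `R`-mixed generator. -/
def MixGen {G M : Type*} (I : G → M → Prop) (R S : Set G) : Prop :=
  ∀ g : G, (g ∈ S ∩ R → cl I (S \ {g}) ≠ cl I S) ∧
    (g ∉ S ∪ R → cl I (S ∪ {g}) ≠ cl I S)

/-- `S` strongly avoids `h` (with respect to the attribute `m`):
`S' ∩ (hᶜ \ {m}) ≠ ∅`. -/
def StronglyAvoids {G M : Type*} (I : G → M → Prop) (m : M) (S : Set G) (h : G) : Prop :=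
  ∃ n, n ∈ intentOf I S ∧ ¬ I h n ∧ n ≠ m

/-- `χ(S)`: the set of objects of `R = G \ m'` strongly avoided by `S`. -/
def chi {G M : Type*} (I : G → M → Prop) (m : M) (S : Set G) : Set G :=
  {h | ¬ I h m ∧ StronglyAvoids I m S h}


section Aux

variable {G M : Type*}

lemma subset_cl' (I : G → M → Prop) (A : Set G) : A ⊆ cl I A :=
  fun a ha n hn => hn a ha

lemma intent_antitone' (I : G → M → Prop) {A B : Set G} (h : A ⊆ B) :
    intentOf I B ⊆ intentOf I A :=
  fun n hn a ha => hn a (h ha)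

lemma cl_union_singleton' (I : G → M → Prop) {S : Set G} {x : G}
    (hx : x ∈ cl I S) : cl I (S ∪ {x}) = cl I S := by
  have h1 : intentOf I (S ∪ {x}) = intentOf I S := by
    apply Set.Subset.antisymm (intent_antitone' I Set.subset_union_left)
    intro n hn a ha
    rcases ha with ha | ha
    · exact hn a ha
    · rcases ha with rfl; exact hx n hn
  unfold cl; rw [h1]

lemma cl_diff_singleton' (I : G → M → Prop) {S : Set G} {x : G}
    (hx : x ∈ cl I (S \ {x})) : cl I (S \ {x}) = cl I S := by
  have h1 : intentOf I (S \ {x}) = intentOf I S := by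
    apply Set.Subset.antisymm _ (intent_antitone' I Set.diff_subset)
    intro n hn a ha
    by_cases hax : a = x
    · subst hax; exact hx n hn
    · exact hn a ⟨ha, hax⟩
  unfold cl; rw [h1]

lemma g_not_mem_clJ' (I : G → M → Prop) {m : M} {g : G} (hg : ¬ I g m)
    {A : Set G} (hgA : g ∉ A) : g ∉ cl (opRel I g m) A := by
  intro hcl
  have hm : m ∈ intentOf (opRel I g m) A := by
    intro h hh
    have hne : h ≠ g := fun e => hgA (e ▸ hh)
    exact Or.inr (Or.inr ⟨hne, rfl⟩)
  rcases hcl m hm with h | h | h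
  · exact hg h
  · exact h.2 rfl
  · exact h.1 rfl

lemma mem_clJ_imp' (I : G → M → Prop) {m : M} {g x : G} (hx : x ≠ g)
    {A : Set G} (hxcl : x ∈ cl (opRel I g m) A)
    {n : M} (hn : n ∈ intentOf I (A \ {g})) (hnm : n ≠ m) : I x n := by
  have hnJ : n ∈ intentOf (opRel I g m) A := by
    intro h hh
    by_cases hhg : h = g
    · exact Or.inr (Or.inl ⟨hhg, hnm⟩)
    · exact Or.inl (hn h ⟨hh, hhg⟩)
  rcases hxcl n hnJ with h | h | h
  · exact h
  · exact absurd h.1 hx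
  · exact absurd h.2 hnm

lemma key_lemma' (I : G → M → Prop) (m : M) (g : G) (hg : ¬ I g m)
    {S : Set G} (hS : MixGen I {h : G | ¬ I h m} S)
    (hf : ¬ MixGen (opRel I g m) {h : G | ¬ I h m} S) :
    intentOf I S = intentOf I (S \ {h : G | ¬ I h m}) \ {m} := by
  unfold MixGen at hf
  obtain ⟨x, hx⟩ := not_forall.mp hf
  rcases not_and_or.mp hx with hx1 | hx2
  · -- removal failure: x ∈ S ∩ R with cl_J (S\{x}) = cl_J S
    obtain ⟨hxSR, hclJ⟩ := _root_.not_imp.mp hx1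
    rw [not_ne_iff] at hclJ
    obtain ⟨hxS, hxR⟩ := hxSR
    have hxRm : ¬ I x m := hxR
    by_cases hxg : x = g
    · subst hxg
      have hmem : x ∈ cl (opRel I x m) (S \ {x}) := by
        rw [hclJ]; exact subset_cl' _ S hxS
      exact absurd hmem (g_not_mem_clJ' I hg (fun h => h.2 rfl))
    · have hxJ : x ∈ cl (opRel I g m) (S \ {x}) := by
        rw [hclJ]; exact subset_cl' _ S hxS
      have star : ∀ n ∈ intentOf I (S \ {x}), n ≠ m → I x n := by
        intro n hn hnm
        exact mem_clJ_imp' I hxg hxJ (intent_antitone' I Set.diff_subset hn) hnm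
      by_cases hm : m ∈ intentOf I (S \ {x})
      · have hSR : S \ {h : G | ¬ I h m} = S \ {x} := by
          ext a
          constructor
          · rintro ⟨haS, haR⟩
            refine ⟨haS, fun hax => haR ?_⟩
            show ¬ I a m
            rw [hax]; exact hxRm
          · rintro ⟨haS, hax⟩
            exact ⟨haS, fun hnot => hnot (hm a ⟨haS, hax⟩)⟩
        rw [hSR]
        ext n
        constructor
        · intro hn
          refine ⟨intent_antitone' I Set.diff_subset hn, fun e => hxRm ?_⟩
          have := hn x hxS
          rwa [Set.mem_singleton_iff.mp e] at this
        · rintro ⟨hn, hnm⟩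
          intro a haS
          by_cases hax : a = x
          · subst hax; exact star n hn (Set.mem_singleton_iff.not.mp hnm)
          · exact hn a ⟨haS, hax⟩
      · exfalso
        have hxcl : x ∈ cl I (S \ {x}) := by
          intro n hn
          by_cases hnm : n = m
          · subst hnm; exact absurd hn hm
          · exact star n hn hnm
        exact (hS x).1 ⟨hxS, hxRm⟩ (cl_diff_singleton' I hxcl)
  · -- addition failure: x ∉ S ∪ R with cl_J (S ∪ {x}) = cl_J S
    exfalso
    obtain ⟨hxSR, hclJ⟩ := _root_.not_imp.mp hx2
    rw [not_ne_iff] at hclJ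
    have hxm : I x m := Classical.byContradiction fun h => hxSR (Or.inr h)
    have hxg : x ≠ g := fun e => (e ▸ hg) hxm
    have hxJ : x ∈ cl (opRel I g m) S := by
      rw [← hclJ]; exact subset_cl' _ (S ∪ {x}) (Or.inr rfl)
    have hxcl : x ∈ cl I S := by
      intro n hn
      by_cases hnm : n = m
      · subst hnm; exact hxm
      · exact mem_clJ_imp' I hxg hxJ (intent_antitone' I Set.diff_subset hn) hnm
    exact (hS x).2 hxSR (cl_union_singleton' I hxcl)

end Aux

theorem statement12 {G M : Type*} (I : G → M → Prop) (m : M) (g : G)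
    (hg : ¬ I g m) (𝒮 : Set (Set G))
    (hmix : ∀ S ∈ 𝒮, MixGen I {h : G | ¬ I h m} S)
    (hinj : Set.InjOn (cl I) 𝒮) :
    ∀ S ∈ 𝒮, ∀ T ∈ 𝒮,
      ¬ MixGen (opRel I g m) {h : G | ¬ I h m} S →
      ¬ MixGen (opRel I g m) {h : G | ¬ I h m} T →
      S \ {h : G | ¬ I h m} = T \ {h : G | ¬ I h m} → S = T := by
  intro S hSmem T hTmem hSf hTf hST
  have hS := key_lemma' I m g hg (hmix S hSmem) hSf
  have hT := key_lemma' I m g hg (hmix T hTmem) hTf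
  apply hinj hSmem hTmem
  show extentOf I (intentOf I S) = extentOf I (intentOf I T)
  rw [hS, hT, hST]
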